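/- Let X be a simplicial set and G a filtered topological group. For any local gauge transformation u : A ⇝ B between local LHGFs A and B on X with gauge group G, the pointwise internal inverse u⁻¹, given by (u⁻¹)_n(⟨a⟩) = u_n(⟨a⟩)⁻¹ in the internal group ρ(G), is a local gauge transformation B ⇝ A, and u ⊙ u⁻¹ = 1 = u⁻¹ ⊙ u, where 1 is the constant gauge transformation with value the unit of G₀. Consequently, local LHGFs on X with gauge group G and local gauge transformations form a groupoid. -/

import Mathlib

set_option autoImplicit false

/-! ## Cubical ω-groupoids (structural data) -/

/-- A cubical ω-groupoid: cubes in every dimension with faces, degeneracies,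
connections, compositions `+ᵢ` and inversions `−ᵢ` in every direction. -/
structure OmegaGpd : Type 1 where
  cube : ℕ → Type
  face : ∀ n, Fin (n+1) → Bool → cube (n+1) → cube n
  degen : ∀ n, Fin (n+1) → cube n → cube (n+1)
  conn : ∀ n, Fin (n+1) → cube n → cube (n+1)
  comp : ∀ n, Fin (n+1) → cube (n+1) → cube (n+1) → cube (n+1)
  inv : ∀ n, Fin (n+1) → cube (n+1) → cube (n+1)

/-- Morphisms of cubical ω-groupoids. -/
structure OmegaGpdHom (K L : OmegaGpd) where
  map : ∀ n, K.cube n → L.cube n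
  map_face : ∀ n (i : Fin (n+1)) (α : Bool) (a : K.cube (n+1)),
    map n (K.face n i α a) = L.face n i α (map (n+1) a)
  map_degen : ∀ n (i : Fin (n+1)) (a : K.cube n),
    map (n+1) (K.degen n i a) = L.degen n i (map n a)
  map_conn : ∀ n (i : Fin (n+1)) (a : K.cube n),
    map (n+1) (K.conn n i a) = L.conn n i (map n a)
  map_comp : ∀ n (i : Fin (n+1)) (a b : K.cube (n+1)),
    map (n+1) (K.comp n i a b) = L.comp n i (map (n+1) a) (map (n+1) b)
  map_inv : ∀ n (i : Fin (n+1)) (a : K.cube (n+1)),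
    map (n+1) (K.inv n i a) = L.inv n i (map (n+1) a)

def OmegaGpdHom.id (K : OmegaGpd) : OmegaGpdHom K K where
  map _ a := a
  map_face _ _ _ _ := rfl
  map_degen _ _ _ := rfl
  map_conn _ _ _ := rfl
  map_comp _ _ _ _ := rfl
  map_inv _ _ _ := rfl

def OmegaGpdHom.comp {K L M : OmegaGpd} (f : OmegaGpdHom K L) (g : OmegaGpdHom L M) :
    OmegaGpdHom K M where
  map n a := g.map n (f.map n a)
  map_face n i α a := by
    show g.map n (f.map n (K.face n i α a)) = M.face n i α (g.map (n+1) (f.map (n+1) a))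
    rw [f.map_face, g.map_face]
  map_degen n i a := by
    show g.map (n+1) (f.map (n+1) (K.degen n i a)) = M.degen n i (g.map n (f.map n a))
    rw [f.map_degen, g.map_degen]
  map_conn n i a := by
    show g.map (n+1) (f.map (n+1) (K.conn n i a)) = M.conn n i (g.map n (f.map n a))
    rw [f.map_conn, g.map_conn]
  map_comp n i a b := by
    show g.map (n+1) (f.map (n+1) (K.comp n i a b))
      = M.comp n i (g.map (n+1) (f.map (n+1) a)) (g.map (n+1) (f.map (n+1) b))
    rw [f.map_comp, g.map_comp]
  map_inv n i a := by
    show g.map (n+1) (f.map (n+1) (K.inv n i a)) = M.inv n i (g.map (n+1) (f.map (n+1) a))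
    rw [f.map_inv, g.map_inv]

/-- Product of cubical ω-groupoids. -/
def prodOmega (K L : OmegaGpd) : OmegaGpd where
  cube n := K.cube n × L.cube n
  face n i α a := (K.face n i α a.1, L.face n i α a.2)
  degen n i a := (K.degen n i a.1, L.degen n i a.2)
  conn n i a := (K.conn n i a.1, L.conn n i a.2)
  comp n i a b := (K.comp n i a.1 b.1, L.comp n i a.2 b.2)
  inv n i a := (K.inv n i a.1, L.inv n i a.2)

/-- The terminal cubical ω-groupoid `0`. -/
def termOmega : OmegaGpd where
  cube _ := PUnit
  face _ _ _ _ := PUnit.unit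
  degen _ _ _ := PUnit.unit
  conn _ _ _ := PUnit.unit
  comp _ _ _ _ := PUnit.unit
  inv _ _ _ := PUnit.unit

def prodMapOmega {A B C D : OmegaGpd} (f : OmegaGpdHom A C) (g : OmegaGpdHom B D) :
    OmegaGpdHom (prodOmega A B) (prodOmega C D) where
  map n a := (f.map n a.1, g.map n a.2)
  map_face n i α a := by
    show (f.map n (A.face n i α a.1), g.map n (B.face n i α a.2))
      = (C.face n i α (f.map (n+1) a.1), D.face n i α (g.map (n+1) a.2))
    rw [f.map_face, g.map_face]
  map_degen n i a := by
    show (f.map (n+1) (A.degen n i a.1), g.map (n+1) (B.degen n i a.2))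
      = (C.degen n i (f.map n a.1), D.degen n i (g.map n a.2))
    rw [f.map_degen, g.map_degen]
  map_conn n i a := by
    show (f.map (n+1) (A.conn n i a.1), g.map (n+1) (B.conn n i a.2))
      = (C.conn n i (f.map n a.1), D.conn n i (g.map n a.2))
    rw [f.map_conn, g.map_conn]
  map_comp n i a b := by
    show (f.map (n+1) (A.comp n i a.1 b.1), g.map (n+1) (B.comp n i a.2 b.2))
      = (C.comp n i (f.map (n+1) a.1) (f.map (n+1) b.1), D.comp n i (g.map (n+1) a.2) (g.map (n+1) b.2))
    rw [f.map_comp, g.map_comp]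
  map_inv n i a := by
    show (f.map (n+1) (A.inv n i a.1), g.map (n+1) (B.inv n i a.2))
      = (C.inv n i (f.map (n+1) a.1), D.inv n i (g.map (n+1) a.2))
    rw [f.map_inv, g.map_inv]

def prodAssocOmega (A B C : OmegaGpd) :
    OmegaGpdHom (prodOmega (prodOmega A B) C) (prodOmega A (prodOmega B C)) where
  map _ x := (x.1.1, (x.1.2, x.2))
  map_face _ _ _ _ := rfl
  map_degen _ _ _ := rfl
  map_conn _ _ _ := rfl
  map_comp _ _ _ _ := rfl
  map_inv _ _ _ := rfl

/-! ## The left path ω-groupoid `P¹K` -/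

/-- The left path ω-groupoid: `(P¹K)ₖ = K_{k+1}` with all structure maps shifted,
leaving the maps of direction `0` over. -/
def pathOmega (K : OmegaGpd) : OmegaGpd where
  cube n := K.cube (n+1)
  face n i α a := K.face (n+1) i.succ α a
  degen n i a := K.degen (n+1) i.succ a
  conn n i a := K.conn (n+1) i.succ a
  comp n i a b := K.comp (n+1) i.succ a b
  inv n i a := K.inv (n+1) i.succ a

def pathOmegaHom {K L : OmegaGpd} (f : OmegaGpdHom K L) :
    OmegaGpdHom (pathOmega K) (pathOmega L) where
  map n a := f.map (n+1) a
  map_face n i α a := f.map_face (n+1) i.succ α a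
  map_degen n i a := f.map_degen (n+1) i.succ a
  map_conn n i a := f.map_conn (n+1) i.succ a
  map_comp n i a b := f.map_comp (n+1) i.succ a b
  map_inv n i a := f.map_inv (n+1) i.succ a

def pathOmegaIter : ℕ → OmegaGpd → OmegaGpd
  | 0, K => K
  | k+1, K => pathOmega (pathOmegaIter k K)

/-! ## Degenerate and globular cubes -/

/-- Iterated `0`-degeneracy of a cube, from dimension `m` up to dimension `n`. -/
def degenMany (K : OmegaGpd) : ∀ (m n : ℕ), m ≤ n → K.cube m → K.cube n
  | m, 0, h, a => cast (congrArg K.cube (Nat.le_zero.mp h)) a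
  | m, n+1, h, a =>
    if h' : m = n + 1 then cast (congrArg K.cube h') a
    else K.degen n 0 (degenMany K m n (by omega) a)

/-- A cube is degenerate if it is in the image of a degeneracy operator. -/
def DegenCube (K : OmegaGpd) : ∀ n, K.cube n → Prop
  | 0, _ => True
  | n+1, a => ∃ (i : Fin (n+1)) (b : K.cube n), a = K.degen n i b

/-- A cube is globular if all its faces in directions `≥ 1` are degenerate. -/
def GlobularCube (K : OmegaGpd) : ∀ n, K.cube n → Prop
  | 0, _ => True
  | n+1, a => ∀ (i : Fin (n+1)) (α : Bool), 1 ≤ i.val → DegenCube K n (K.face n i α a)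

/-! ## Groupoids internal to ω-groupoids -/

/-- Structural data of a groupoid internal to the category of cubical ω-groupoids,
with ω-groupoid of objects `Ob` and ω-groupoid of morphisms `Mor`. -/
structure InternalGroupoidStr (Ob Mor : OmegaGpd) where
  src : ∀ n, Mor.cube n → Ob.cube n
  tgt : ∀ n, Mor.cube n → Ob.cube n
  unit : ∀ n, Ob.cube n → Mor.cube n
  comp : ∀ n (f g : Mor.cube n), tgt n f = src n g → Mor.cube n
  inv : ∀ n, Mor.cube n → Mor.cube n

/-- The axioms making the data of `InternalGroupoidStr` into a groupoid internal to
the category of cubical ω-groupoids: the structure maps are morphisms of ω-groupoids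
and they satisfy the groupoid axioms on the nose. -/
structure IsInternalGroupoid {Ob Mor : OmegaGpd} (S : InternalGroupoidStr Ob Mor) : Prop where
  src_face : ∀ n (i : Fin (n+1)) (α : Bool) (a : Mor.cube (n+1)),
    S.src n (Mor.face n i α a) = Ob.face n i α (S.src (n+1) a)
  tgt_face : ∀ n (i : Fin (n+1)) (α : Bool) (a : Mor.cube (n+1)),
    S.tgt n (Mor.face n i α a) = Ob.face n i α (S.tgt (n+1) a)
  src_degen : ∀ n (i : Fin (n+1)) (a : Mor.cube n),
    S.src (n+1) (Mor.degen n i a) = Ob.degen n i (S.src n a)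
  tgt_degen : ∀ n (i : Fin (n+1)) (a : Mor.cube n),
    S.tgt (n+1) (Mor.degen n i a) = Ob.degen n i (S.tgt n a)
  unit_face : ∀ n (i : Fin (n+1)) (α : Bool) (a : Ob.cube (n+1)),
    S.unit n (Ob.face n i α a) = Mor.face n i α (S.unit (n+1) a)
  unit_degen : ∀ n (i : Fin (n+1)) (a : Ob.cube n),
    S.unit (n+1) (Ob.degen n i a) = Mor.degen n i (S.unit n a)
  src_unit : ∀ n (x : Ob.cube n), S.src n (S.unit n x) = x
  tgt_unit : ∀ n (x : Ob.cube n), S.tgt n (S.unit n x) = x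
  src_comp : ∀ n (f g : Mor.cube n) (h : S.tgt n f = S.src n g),
    S.src n (S.comp n f g h) = S.src n f
  tgt_comp : ∀ n (f g : Mor.cube n) (h : S.tgt n f = S.src n g),
    S.tgt n (S.comp n f g h) = S.tgt n g
  unit_comp : ∀ n (f : Mor.cube n) (h : S.tgt n (S.unit n (S.src n f)) = S.src n f),
    S.comp n (S.unit n (S.src n f)) f h = f
  comp_unit : ∀ n (f : Mor.cube n) (h : S.tgt n f = S.src n (S.unit n (S.tgt n f))),
    S.comp n f (S.unit n (S.tgt n f)) h = f
  comp_assoc : ∀ n (f g k : Mor.cube n) (h1 : S.tgt n f = S.src n g)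
    (h2 : S.tgt n (S.comp n f g h1) = S.src n k) (h3 : S.tgt n g = S.src n k)
    (h4 : S.tgt n f = S.src n (S.comp n g k h3)),
    S.comp n (S.comp n f g h1) k h2 = S.comp n f (S.comp n g k h3) h4
  src_inv : ∀ n (f : Mor.cube n), S.src n (S.inv n f) = S.tgt n f
  tgt_inv : ∀ n (f : Mor.cube n), S.tgt n (S.inv n f) = S.src n f
  inv_comp : ∀ n (f : Mor.cube n) (h : S.tgt n (S.inv n f) = S.src n f),
    S.comp n (S.inv n f) f h = S.unit n (S.tgt n f)
  comp_inv : ∀ n (f : Mor.cube n) (h : S.tgt n f = S.src n (S.inv n f)),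
    S.comp n f (S.inv n f) h = S.unit n (S.src n f)
  comp_face : ∀ n (i : Fin (n+1)) (α : Bool) (f g : Mor.cube (n+1))
    (h : S.tgt (n+1) f = S.src (n+1) g)
    (h' : S.tgt n (Mor.face n i α f) = S.src n (Mor.face n i α g)),
    Mor.face n i α (S.comp (n+1) f g h) = S.comp n (Mor.face n i α f) (Mor.face n i α g) h'
  inv_face : ∀ n (i : Fin (n+1)) (α : Bool) (f : Mor.cube (n+1)),
    Mor.face n i α (S.inv (n+1) f) = S.inv n (Mor.face n i α f)

/-- The path internal groupoid `(P¹K, K)` with source/target `∂₀⁰, ∂₀¹`,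
unit `ε₀`, composition `+₀` and inversion `−₀`. -/
def pathIntStr (K : OmegaGpd) : InternalGroupoidStr K (pathOmega K) where
  src n a := K.face n 0 false a
  tgt n a := K.face n 0 true a
  unit n x := K.degen n 0 x
  comp n f g _ := K.comp n 0 f g
  inv n f := K.inv n 0 f

/-- The path internal groupoid `P¹K = (P¹K¹, P¹K⁰)` of an internal groupoid `K = (K¹, K⁰)`. -/
def pathIntGpdStr {Ob Mor : OmegaGpd} (S : InternalGroupoidStr Ob Mor) :
    InternalGroupoidStr (pathOmega Ob) (pathOmega Mor) where
  src n a := S.src (n+1) a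
  tgt n a := S.tgt (n+1) a
  unit n x := S.unit (n+1) x
  comp n f g h := S.comp (n+1) f g h
  inv n f := S.inv (n+1) f

/-- Iterated path internal groupoid `PᵏK`. -/
def pathIntGpdIter {Ob Mor : OmegaGpd} (S : InternalGroupoidStr Ob Mor) :
    ∀ k, InternalGroupoidStr (pathOmegaIter k Ob) (pathOmegaIter k Mor)
  | 0 => S
  | k+1 => pathIntGpdStr (pathIntGpdIter S k)

/-- Morphisms of groupoids internal to ω-groupoids. -/
structure InternalGroupoidHom {O1 M1 O2 M2 : OmegaGpd}
    (G : InternalGroupoidStr O1 M1) (H : InternalGroupoidStr O2 M2) where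
  mapObj : OmegaGpdHom O1 O2
  mapMor : OmegaGpdHom M1 M2
  compat_src : ∀ n (f : M1.cube n), H.src n (mapMor.map n f) = mapObj.map n (G.src n f)
  compat_tgt : ∀ n (f : M1.cube n), H.tgt n (mapMor.map n f) = mapObj.map n (G.tgt n f)
  compat_unit : ∀ n (x : O1.cube n), mapMor.map n (G.unit n x) = H.unit n (mapObj.map n x)
  compat_comp : ∀ n (f g : M1.cube n) (h : G.tgt n f = G.src n g)
    (h' : H.tgt n (mapMor.map n f) = H.src n (mapMor.map n g)),
    mapMor.map n (G.comp n f g h) = H.comp n (mapMor.map n f) (mapMor.map n g) h'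
  compat_inv : ∀ n (f : M1.cube n), mapMor.map n (G.inv n f) = H.inv n (mapMor.map n f)

def IGHid {Ob Mor : OmegaGpd} (S : InternalGroupoidStr Ob Mor) : InternalGroupoidHom S S where
  mapObj := OmegaGpdHom.id Ob
  mapMor := OmegaGpdHom.id Mor
  compat_src _ _ := rfl
  compat_tgt _ _ := rfl
  compat_unit _ _ := rfl
  compat_comp _ _ _ _ _ := rfl
  compat_inv _ _ := rfl

def IGHcomp {O1 M1 O2 M2 O3 M3 : OmegaGpd}
    {G : InternalGroupoidStr O1 M1} {H : InternalGroupoidStr O2 M2} {J : InternalGroupoidStr O3 M3}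
    (F : InternalGroupoidHom G H) (E : InternalGroupoidHom H J) : InternalGroupoidHom G J where
  mapObj := F.mapObj.comp E.mapObj
  mapMor := F.mapMor.comp E.mapMor
  compat_src n f := by
    show J.src n (E.mapMor.map n (F.mapMor.map n f)) = E.mapObj.map n (F.mapObj.map n (G.src n f))
    rw [E.compat_src, F.compat_src]
  compat_tgt n f := by
    show J.tgt n (E.mapMor.map n (F.mapMor.map n f)) = E.mapObj.map n (F.mapObj.map n (G.tgt n f))
    rw [E.compat_tgt, F.compat_tgt]
  compat_unit n x := by
    show E.mapMor.map n (F.mapMor.map n (G.unit n x)) = J.unit n (E.mapObj.map n (F.mapObj.map n x))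
    rw [F.compat_unit, E.compat_unit]
  compat_comp n f g h h' := by
    have h1 : H.tgt n (F.mapMor.map n f) = H.src n (F.mapMor.map n g) := by
      rw [F.compat_tgt, F.compat_src, h]
    show E.mapMor.map n (F.mapMor.map n (G.comp n f g h))
      = J.comp n (E.mapMor.map n (F.mapMor.map n f)) (E.mapMor.map n (F.mapMor.map n g)) h'
    rw [F.compat_comp n f g h h1, E.compat_comp n _ _ h1 h']
  compat_inv n f := by
    show E.mapMor.map n (F.mapMor.map n (G.inv n f)) = J.inv n (E.mapMor.map n (F.mapMor.map n f))
    rw [F.compat_inv, E.compat_inv]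

/-- An ω-groupoid morphism `f : K → K'` induces an internal groupoid morphism
`P¹f : P¹K → P¹K'` between the path internal groupoids. -/
def pathIntHom {K K' : OmegaGpd} (f : OmegaGpdHom K K') :
    InternalGroupoidHom (pathIntStr K) (pathIntStr K') where
  mapObj := f
  mapMor := pathOmegaHom f
  compat_src n a := (f.map_face n 0 false a).symm
  compat_tgt n a := (f.map_face n 0 true a).symm
  compat_unit n x := f.map_degen n 0 x
  compat_comp n a b _ _ := f.map_comp n 0 a b
  compat_inv n a := f.map_inv n 0 a

/-! ## Groups internal to ω-groupoids -/

/-- Structural data of a group internal to the category of cubical ω-groupoids. -/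
structure InternalGroup (K : OmegaGpd) where
  mul : ∀ n, K.cube n → K.cube n → K.cube n
  inv : ∀ n, K.cube n → K.cube n
  one : ∀ n, K.cube n

/-- The axioms making `InternalGroup` data into a group internal to ω-groupoids:
the operations are morphisms of ω-groupoids satisfying the group axioms on the nose. -/
structure IsInternalGroup (K : OmegaGpd) (g : InternalGroup K) : Prop where
  mul_face : ∀ n (i : Fin (n+1)) (α : Bool) (a b : K.cube (n+1)),
    K.face n i α (g.mul (n+1) a b) = g.mul n (K.face n i α a) (K.face n i α b)
  mul_degen : ∀ n (i : Fin (n+1)) (a b : K.cube n),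
    K.degen n i (g.mul n a b) = g.mul (n+1) (K.degen n i a) (K.degen n i b)
  mul_conn : ∀ n (i : Fin (n+1)) (a b : K.cube n),
    K.conn n i (g.mul n a b) = g.mul (n+1) (K.conn n i a) (K.conn n i b)
  mul_compc : ∀ n (i : Fin (n+1)) (x y z w : K.cube (n+1)),
    g.mul (n+1) (K.comp n i x y) (K.comp n i z w) = K.comp n i (g.mul (n+1) x z) (g.mul (n+1) y w)
  mul_invop : ∀ n (i : Fin (n+1)) (x y : K.cube (n+1)),
    g.mul (n+1) (K.inv n i x) (K.inv n i y) = K.inv n i (g.mul (n+1) x y)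
  inv_face : ∀ n (i : Fin (n+1)) (α : Bool) (a : K.cube (n+1)),
    K.face n i α (g.inv (n+1) a) = g.inv n (K.face n i α a)
  inv_degen : ∀ n (i : Fin (n+1)) (a : K.cube n),
    K.degen n i (g.inv n a) = g.inv (n+1) (K.degen n i a)
  inv_conn : ∀ n (i : Fin (n+1)) (a : K.cube n),
    K.conn n i (g.inv n a) = g.inv (n+1) (K.conn n i a)
  inv_compc : ∀ n (i : Fin (n+1)) (x y : K.cube (n+1)),
    g.inv (n+1) (K.comp n i x y) = K.comp n i (g.inv (n+1) x) (g.inv (n+1) y)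
  inv_invop : ∀ n (i : Fin (n+1)) (x : K.cube (n+1)),
    g.inv (n+1) (K.inv n i x) = K.inv n i (g.inv (n+1) x)
  one_face : ∀ n (i : Fin (n+1)) (α : Bool), K.face n i α (g.one (n+1)) = g.one n
  one_degen : ∀ n (i : Fin (n+1)), K.degen n i (g.one n) = g.one (n+1)
  one_conn : ∀ n (i : Fin (n+1)), K.conn n i (g.one n) = g.one (n+1)
  one_compc : ∀ n (i : Fin (n+1)), K.comp n i (g.one (n+1)) (g.one (n+1)) = g.one (n+1)
  one_invop : ∀ n (i : Fin (n+1)), K.inv n i (g.one (n+1)) = g.one (n+1)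
  mul_assoc : ∀ n (a b c : K.cube n), g.mul n (g.mul n a b) c = g.mul n a (g.mul n b c)
  one_mul : ∀ n (a : K.cube n), g.mul n (g.one n) a = a
  mul_one : ∀ n (a : K.cube n), g.mul n a (g.one n) = a
  inv_mul : ∀ n (a : K.cube n), g.mul n (g.inv n a) a = g.one n
  mul_inv : ∀ n (a : K.cube n), g.mul n a (g.inv n a) = g.one n

/-- `f : K → L` intertwines the internal group structures. -/
def IsInternalGroupHomMap {K L : OmegaGpd} (gK : InternalGroup K) (gL : InternalGroup L)
    (f : OmegaGpdHom K L) : Prop :=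
  (∀ n a b, f.map n (gK.mul n a b) = gL.mul n (f.map n a) (f.map n b)) ∧
  (∀ n a, f.map n (gK.inv n a) = gL.inv n (f.map n a)) ∧
  (∀ n, f.map n (gK.one n) = gL.one n)

/-- The delooping internal groupoid `BK = (K, 0)` of an internal group. -/
def BStr (K : OmegaGpd) (g : InternalGroup K) : InternalGroupoidStr termOmega K where
  src _ _ := PUnit.unit
  tgt _ _ := PUnit.unit
  unit n _ := g.one n
  comp n f f' _ := g.mul n f f'
  inv n f := g.inv n f

/-- Delooping of a morphism of internal groups. -/
def BHomOf {L L' : OmegaGpd} {gL : InternalGroup L} {gL' : InternalGroup L'}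
    (g : OmegaGpdHom L L') (hg : IsInternalGroupHomMap gL gL' g) :
    InternalGroupoidHom (BStr L gL) (BStr L' gL') where
  mapObj := OmegaGpdHom.id termOmega
  mapMor := g
  compat_src _ _ := rfl
  compat_tgt _ _ := rfl
  compat_unit n _ := hg.2.2 n
  compat_comp n f f' _ _ := hg.1 n f f'
  compat_inv n f := hg.2.1 n f

/-! ## Local lattice higher gauge fields and gauge transformations -/

/-- The set of local lattice higher gauge fields on (the homotopy ω-groupoid of) `KX`,
with gauge internal group `(K, g)`: morphisms `P¹(KX) → BK` of internal groupoids. -/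
abbrev LHGF (KX K : OmegaGpd) (g : InternalGroup K) :=
  InternalGroupoidHom (pathIntStr KX) (BStr K g)

/-- `u : ρ(|X|) → ρ(G)` is a local gauge transformation from `A` to `B`:
`uₙ(s⟨a⟩) ⊙ A¹(⟨a⟩) ⊙ uₙ(t⟨a⟩)⁻¹ = B¹(⟨a⟩)` for every homotopy cube. -/
def IsGaugeTransf {KX L : OmegaGpd} (g : InternalGroup L)
    (A B : LHGF KX L g) (u : OmegaGpdHom KX L) : Prop :=
  ∀ n (a : KX.cube (n+1)),
    g.mul n (g.mul n (u.map n (KX.face n 0 false a)) (A.mapMor.map n a))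
        (g.inv n (u.map n (KX.face n 0 true a)))
      = B.mapMor.map n a

/-- Pointwise internal product of two `ρ(G)`-valued fields. -/
def mulHom {K L : OmegaGpd} {g : InternalGroup L} (hg : IsInternalGroup L g)
    (u v : OmegaGpdHom K L) : OmegaGpdHom K L where
  map n a := g.mul n (u.map n a) (v.map n a)
  map_face n i α a := by
    show g.mul n (u.map n (K.face n i α a)) (v.map n (K.face n i α a))
      = L.face n i α (g.mul (n+1) (u.map (n+1) a) (v.map (n+1) a))
    rw [u.map_face, v.map_face, hg.mul_face]
  map_degen n i a := by
    show g.mul (n+1) (u.map (n+1) (K.degen n i a)) (v.map (n+1) (K.degen n i a))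
      = L.degen n i (g.mul n (u.map n a) (v.map n a))
    rw [u.map_degen, v.map_degen, hg.mul_degen]
  map_conn n i a := by
    show g.mul (n+1) (u.map (n+1) (K.conn n i a)) (v.map (n+1) (K.conn n i a))
      = L.conn n i (g.mul n (u.map n a) (v.map n a))
    rw [u.map_conn, v.map_conn, hg.mul_conn]
  map_comp n i a b := by
    show g.mul (n+1) (u.map (n+1) (K.comp n i a b)) (v.map (n+1) (K.comp n i a b))
      = L.comp n i (g.mul (n+1) (u.map (n+1) a) (v.map (n+1) a))
          (g.mul (n+1) (u.map (n+1) b) (v.map (n+1) b))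
    rw [u.map_comp, v.map_comp, hg.mul_compc]
  map_inv n i a := by
    show g.mul (n+1) (u.map (n+1) (K.inv n i a)) (v.map (n+1) (K.inv n i a))
      = L.inv n i (g.mul (n+1) (u.map (n+1) a) (v.map (n+1) a))
    rw [u.map_inv, v.map_inv, hg.mul_invop]

/-- Pointwise internal inverse of a `ρ(G)`-valued field. -/
def invHomG {K L : OmegaGpd} {g : InternalGroup L} (hg : IsInternalGroup L g)
    (u : OmegaGpdHom K L) : OmegaGpdHom K L where
  map n a := g.inv n (u.map n a)
  map_face n i α a := by
    show g.inv n (u.map n (K.face n i α a)) = L.face n i α (g.inv (n+1) (u.map (n+1) a))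
    rw [u.map_face, hg.inv_face]
  map_degen n i a := by
    show g.inv (n+1) (u.map (n+1) (K.degen n i a)) = L.degen n i (g.inv n (u.map n a))
    rw [u.map_degen, hg.inv_degen]
  map_conn n i a := by
    show g.inv (n+1) (u.map (n+1) (K.conn n i a)) = L.conn n i (g.inv n (u.map n a))
    rw [u.map_conn, hg.inv_conn]
  map_comp n i a b := by
    show g.inv (n+1) (u.map (n+1) (K.comp n i a b))
      = L.comp n i (g.inv (n+1) (u.map (n+1) a)) (g.inv (n+1) (u.map (n+1) b))
    rw [u.map_comp, hg.inv_compc]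
  map_inv n i a := by
    show g.inv (n+1) (u.map (n+1) (K.inv n i a)) = L.inv n i (g.inv (n+1) (u.map (n+1) a))
    rw [u.map_inv, hg.inv_invop]

/-- The constant field with value the internal unit. -/
def oneHom {K L : OmegaGpd} {g : InternalGroup L} (hg : IsInternalGroup L g) :
    OmegaGpdHom K L where
  map n _ := g.one n
  map_face n i α _ := (hg.one_face n i α).symm
  map_degen n i _ := (hg.one_degen n i).symm
  map_conn n i _ := (hg.one_conn n i).symm
  map_comp n i _ _ := (hg.one_compc n i).symm
  map_inv n i _ := (hg.one_invop n i).symm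

/-! ## Filtered spaces, filtered topological groups and the homotopy ω-groupoid functor -/

structure FilteredSpace : Type 1 where
  carrier : Type
  top : TopologicalSpace carrier
  filt : ℕ → Set carrier
  mono : Monotone filt
  covers : ∀ x, ∃ n, x ∈ filt n

attribute [instance] FilteredSpace.top

structure FilteredMap (X Y : FilteredSpace) where
  toFun : X.carrier → Y.carrier
  cont : Continuous toFun
  filt : ∀ n x, x ∈ X.filt n → toFun x ∈ Y.filt n

def FilteredMap.id (X : FilteredSpace) : FilteredMap X X :=
  ⟨fun a => a, continuous_id, fun _ _ h => h⟩

def FilteredMap.comp {X Y Z : FilteredSpace} (f : FilteredMap X Y) (g : FilteredMap Y Z) :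
    FilteredMap X Z :=
  ⟨fun a => g.toFun (f.toFun a), g.cont.comp f.cont, fun n x h => g.filt n _ (f.filt n x h)⟩

def FilteredSpace.prod (X Y : FilteredSpace) : FilteredSpace where
  carrier := X.carrier × Y.carrier
  top := inferInstance
  filt n := X.filt n ×ˢ Y.filt n
  mono := fun _ _ h => Set.prod_mono (X.mono h) (Y.mono h)
  covers := fun p => by
    obtain ⟨n, hn⟩ := X.covers p.1
    obtain ⟨m, hm⟩ := Y.covers p.2
    exact ⟨max n m, X.mono (le_max_left n m) hn, Y.mono (le_max_right n m) hm⟩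

def FilteredSpace.pt : FilteredSpace where
  carrier := PUnit
  top := inferInstance
  filt _ := Set.univ
  mono := fun _ _ _ => le_rfl
  covers := fun _ => ⟨0, trivial⟩

/-- A filtered topological group: a topological group filtered by subgroups. -/
structure FilteredTopGroup : Type 1 where
  carrier : Type
  grp : Group carrier
  top : TopologicalSpace carrier
  tgrp : @IsTopologicalGroup carrier top grp
  filt : ℕ → @Subgroup carrier grp
  mono : Monotone filt
  covers : ∀ x, ∃ n, x ∈ filt n

attribute [instance] FilteredTopGroup.grp FilteredTopGroup.top FilteredTopGroup.tgrp

def FilteredTopGroup.space (G : FilteredTopGroup) : FilteredSpace where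
  carrier := G.carrier
  top := G.top
  filt n := (G.filt n : Set G.carrier)
  mono := fun _ _ h _ hx => G.mono h hx
  covers := fun x => G.covers x

def FilteredTopGroup.mulMap (G : FilteredTopGroup) :
    FilteredMap (G.space.prod G.space) G.space where
  toFun p := (show G.carrier from p.1) * (show G.carrier from p.2)
  cont := by
    show Continuous fun p : G.carrier × G.carrier => p.1 * p.2
    exact continuous_mul
  filt := fun n x h => by exact mul_mem h.1 h.2

def FilteredTopGroup.invMap (G : FilteredTopGroup) : FilteredMap G.space G.space where
  toFun a := ((show G.carrier from a)⁻¹ : G.carrier)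
  cont := by
    show Continuous fun a : G.carrier => a⁻¹
    exact continuous_inv
  filt := fun n x h => by exact inv_mem h

def FilteredTopGroup.oneMap (G : FilteredTopGroup) : FilteredMap FilteredSpace.pt G.space where
  toFun _ := (1 : G.carrier)
  cont := continuous_const
  filt := fun n _ _ => by exact one_mem (G.filt n)

/-- A continuous filtered group homomorphism. -/
structure FilteredGroupHom (G H : FilteredTopGroup) where
  toMap : FilteredMap G.space H.space
  map_mul : ∀ a b : G.carrier, toMap.toFun (a * b) = (show H.carrier from toMap.toFun a) * (show H.carrier from toMap.toFun b)

/-- An abstract homotopy ω-groupoid functor `ρ : FTop → ωGpd`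
(finite-product preserving, with distinguished cubes on the point). -/
structure RhoFunctor : Type 1 where
  obj : FilteredSpace → OmegaGpd
  map : ∀ {X Y : FilteredSpace}, FilteredMap X Y → OmegaGpdHom (obj X) (obj Y)
  map_id : ∀ X, map (FilteredMap.id X) = OmegaGpdHom.id (obj X)
  map_comp : ∀ {X Y Z : FilteredSpace} (f : FilteredMap X Y) (g : FilteredMap Y Z),
    map (f.comp g) = (map f).comp (map g)
  pairU : ∀ X Y : FilteredSpace, OmegaGpdHom (prodOmega (obj X) (obj Y)) (obj (X.prod Y))
  pairUinv : ∀ X Y : FilteredSpace, OmegaGpdHom (obj (X.prod Y)) (prodOmega (obj X) (obj Y))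
  pair_li : ∀ X Y n a, (pairUinv X Y).map n ((pairU X Y).map n a) = a
  pair_ri : ∀ X Y n a, (pairU X Y).map n ((pairUinv X Y).map n a) = a
  ptCube : ∀ n, (obj FilteredSpace.pt).cube n

/-- The internal group structure on `ρ(G)` induced by a filtered topological group `G`. -/
def rhoGroup (ρ : RhoFunctor) (G : FilteredTopGroup) : InternalGroup (ρ.obj G.space) where
  mul n a b := (ρ.map G.mulMap).map n ((ρ.pairU G.space G.space).map n (a, b))
  inv n a := (ρ.map G.invMap).map n a
  one n := (ρ.map G.oneMap).map n (ρ.ptCube n)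

/-! ## Globular sets and ∞-groupoids -/

structure GlobularSet : Type 1 where
  cell : ℕ → Type
  src : ∀ n, cell (n+1) → cell n
  tgt : ∀ n, cell (n+1) → cell n
  id : ∀ n, cell n → cell (n+1)

/-- Compositions `+ᵢ` and inversions `−ᵢ` (for `i < n`) on a globular set. -/
structure InfGpdStr (G : GlobularSet) where
  comp : ∀ n i, i < n → G.cell n → G.cell n → G.cell n
  inv : ∀ n i, i < n → G.cell n → G.cell n

/-- The axioms of a (strict, globular) ∞-groupoid. -/
structure IsInfGpd (G : GlobularSet) (S : InfGpdStr G) : Prop where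
  src_src : ∀ n (a : G.cell (n+2)), G.src n (G.src (n+1) a) = G.src n (G.tgt (n+1) a)
  tgt_tgt : ∀ n (a : G.cell (n+2)), G.tgt n (G.src (n+1) a) = G.tgt n (G.tgt (n+1) a)
  src_id : ∀ n (a : G.cell n), G.src n (G.id n a) = a
  tgt_id : ∀ n (a : G.cell n), G.tgt n (G.id n a) = a
  src_comp_top : ∀ n (h : n < n+1) (a b : G.cell (n+1)),
    G.src n (S.comp (n+1) n h a b) = G.src n a
  tgt_comp_top : ∀ n (h : n < n+1) (a b : G.cell (n+1)),
    G.tgt n (S.comp (n+1) n h a b) = G.tgt n b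
  comp_assoc : ∀ n i (h : i < n) (a b c : G.cell n),
    S.comp n i h (S.comp n i h a b) c = S.comp n i h a (S.comp n i h b c)
  id_comp_top : ∀ n (h : n < n+1) (a : G.cell (n+1)),
    S.comp (n+1) n h (G.id n (G.src n a)) a = a
  comp_id_top : ∀ n (h : n < n+1) (a : G.cell (n+1)),
    S.comp (n+1) n h a (G.id n (G.tgt n a)) = a
  inv_comp_top : ∀ n (h : n < n+1) (a : G.cell (n+1)),
    S.comp (n+1) n h (S.inv (n+1) n h a) a = G.id n (G.tgt n a)
  comp_inv_top : ∀ n (h : n < n+1) (a : G.cell (n+1)),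
    S.comp (n+1) n h a (S.inv (n+1) n h a) = G.id n (G.src n a)

/-- A (bundled) ∞-groupoid. -/
structure InfGpd : Type 1 where
  glob : GlobularSet
  str : InfGpdStr glob

structure InfGpdHom (A B : InfGpd) where
  map : ∀ n, A.glob.cell n → B.glob.cell n
  map_src : ∀ n (a : A.glob.cell (n+1)), map n (A.glob.src n a) = B.glob.src n (map (n+1) a)
  map_tgt : ∀ n (a : A.glob.cell (n+1)), map n (A.glob.tgt n a) = B.glob.tgt n (map (n+1) a)
  map_id : ∀ n (a : A.glob.cell n), map (n+1) (A.glob.id n a) = B.glob.id n (map n a)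
  map_comp : ∀ n i (h : i < n) (a b : A.glob.cell n),
    map n (A.str.comp n i h a b) = B.str.comp n i h (map n a) (map n b)
  map_inv : ∀ n i (h : i < n) (a : A.glob.cell n),
    map n (A.str.inv n i h a) = B.str.inv n i h (map n a)

def InfGpdHom.id (A : InfGpd) : InfGpdHom A A where
  map _ a := a
  map_src _ _ := rfl
  map_tgt _ _ := rfl
  map_id _ _ := rfl
  map_comp _ _ _ _ _ := rfl
  map_inv _ _ _ _ := rfl

def InfGpdHom.comp {A B C : InfGpd} (f : InfGpdHom A B) (g : InfGpdHom B C) :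
    InfGpdHom A C where
  map n a := g.map n (f.map n a)
  map_src n a := by
    show g.map n (f.map n (A.glob.src n a)) = C.glob.src n (g.map (n+1) (f.map (n+1) a))
    rw [f.map_src, g.map_src]
  map_tgt n a := by
    show g.map n (f.map n (A.glob.tgt n a)) = C.glob.tgt n (g.map (n+1) (f.map (n+1) a))
    rw [f.map_tgt, g.map_tgt]
  map_id n a := by
    show g.map (n+1) (f.map (n+1) (A.glob.id n a)) = C.glob.id n (g.map n (f.map n a))
    rw [f.map_id, g.map_id]
  map_comp n i h a b := by
    show g.map n (f.map n (A.str.comp n i h a b))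
      = C.str.comp n i h (g.map n (f.map n a)) (g.map n (f.map n b))
    rw [f.map_comp, g.map_comp]
  map_inv n i h a := by
    show g.map n (f.map n (A.str.inv n i h a)) = C.str.inv n i h (g.map n (f.map n a))
    rw [f.map_inv, g.map_inv]

instance : CategoryTheory.Category InfGpd where
  Hom := InfGpdHom
  id := InfGpdHom.id
  comp := InfGpdHom.comp
  id_comp _ := rfl
  comp_id _ := rfl
  assoc _ _ _ := rfl

/-- Iterated source down to dimension 0. -/
def GlobularSet.srcIterTo (G : GlobularSet) : ∀ n, G.cell n → G.cell 0
  | 0, a => a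
  | n+1, a => G.srcIterTo n (G.src n a)

def GlobularSet.tgtIterTo (G : GlobularSet) : ∀ n, G.cell n → G.cell 0
  | 0, a => a
  | n+1, a => G.tgtIterTo n (G.tgt n a)

/-- Iterated identity up from dimension 0. -/
def GlobularSet.idIterTo (G : GlobularSet) : ∀ n, G.cell 0 → G.cell n
  | 0, a => a
  | n+1, a => G.id n (G.idIterTo n a)

/-- Iterated source from dimension `n` down to dimension `i`. -/
def GlobularSet.downTo (G : GlobularSet) : ∀ (n : ℕ), G.cell n → ∀ i, i ≤ n → G.cell i
  | 0, a, 0, _ => a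
  | 0, _, i+1, h => absurd h (by omega)
  | n+1, a, i, h =>
    if h' : i = n + 1 then cast (congrArg G.cell h'.symm) a
    else G.downTo n (G.src n a) i (by omega)

/-- Data of a group internal to ∞-groupoids. -/
structure InfInternalGroup (A : InfGpd) where
  mul : ∀ n, A.glob.cell n → A.glob.cell n → A.glob.cell n
  inv : ∀ n, A.glob.cell n → A.glob.cell n
  one : ∀ n, A.glob.cell n

structure IsInfInternalGroup (A : InfGpd) (g : InfInternalGroup A) : Prop where
  mul_src : ∀ n a b, A.glob.src n (g.mul (n+1) a b) = g.mul n (A.glob.src n a) (A.glob.src n b)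
  mul_tgt : ∀ n a b, A.glob.tgt n (g.mul (n+1) a b) = g.mul n (A.glob.tgt n a) (A.glob.tgt n b)
  mul_idc : ∀ n a b, A.glob.id n (g.mul n a b) = g.mul (n+1) (A.glob.id n a) (A.glob.id n b)
  inv_src : ∀ n a, A.glob.src n (g.inv (n+1) a) = g.inv n (A.glob.src n a)
  inv_tgt : ∀ n a, A.glob.tgt n (g.inv (n+1) a) = g.inv n (A.glob.tgt n a)
  inv_idc : ∀ n a, A.glob.id n (g.inv n a) = g.inv (n+1) (A.glob.id n a)
  one_src : ∀ n, A.glob.src n (g.one (n+1)) = g.one n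
  one_tgt : ∀ n, A.glob.tgt n (g.one (n+1)) = g.one n
  one_idc : ∀ n, A.glob.id n (g.one n) = g.one (n+1)
  mul_assoc : ∀ n (a b c : A.glob.cell n), g.mul n (g.mul n a b) c = g.mul n a (g.mul n b c)
  one_mul : ∀ n (a : A.glob.cell n), g.mul n (g.one n) a = a
  mul_one : ∀ n (a : A.glob.cell n), g.mul n a (g.one n) = a
  inv_mul : ∀ n (a : A.glob.cell n), g.mul n (g.inv n a) a = g.one n
  mul_inv : ∀ n (a : A.glob.cell n), g.mul n a (g.inv n a) = g.one n

/-! ## The shift `K[-1]` -/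

def shiftCell (A : InfGpd) : ℕ → Type
  | 0 => PUnit
  | n+1 => A.glob.cell n

/-- The shifted globular set `K[-1]` of a group internal to ∞-groupoids. -/
def shiftGlob (A : InfGpd) (g : InfInternalGroup A) : GlobularSet where
  cell := shiftCell A
  src n := match n with
    | 0 => fun _ => PUnit.unit
    | n+1 => A.glob.src n
  tgt n := match n with
    | 0 => fun _ => PUnit.unit
    | n+1 => A.glob.tgt n
  id n := match n with
    | 0 => fun _ => g.one 0
    | n+1 => A.glob.id n

/-- The shifted compositions: in the lowest direction the internal multiplication `⊙`,
the internal inversion as lowest inversion, in the other directions the shifted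
compositions and inversions of `K`. -/
def shiftStr (A : InfGpd) (g : InfInternalGroup A) : InfGpdStr (shiftGlob A g) where
  comp n i h a b := match n, i, h, a, b with
    | 0, i, h, _, _ => absurd h (Nat.not_lt_zero i)
    | n+1, 0, _, a, b => g.mul n a b
    | n+1, i+1, h, a, b => A.str.comp n i (Nat.lt_of_succ_lt_succ h) a b
  inv n i h a := match n, i, h, a with
    | 0, i, h, _ => absurd h (Nat.not_lt_zero i)
    | n+1, 0, _, a => g.inv n a
    | n+1, i+1, h, a => A.str.inv n i (Nat.lt_of_succ_lt_succ h) a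

def shiftInf (A : InfGpd) (g : InfInternalGroup A) : InfGpd :=
  ⟨shiftGlob A g, shiftStr A g⟩

/-! ## The globular-cubes functor `H` -/

/-- Closure properties of globular cubes needed to form the ∞-groupoid `HK`
(consequences of the cubical relations). -/
structure HData (K : OmegaGpd) : Prop where
  face_glob : ∀ n (α : Bool) (a : K.cube (n+1)),
    GlobularCube K (n+1) a → GlobularCube K n (K.face n 0 α a)
  degen_glob : ∀ n (a : K.cube n),
    GlobularCube K n a → GlobularCube K (n+1) (K.degen n 0 a)
  comp_glob : ∀ n (i : Fin (n+1)) (a b : K.cube (n+1)),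
    GlobularCube K (n+1) a → GlobularCube K (n+1) b → GlobularCube K (n+1) (K.comp n i a b)
  inv_glob : ∀ n (i : Fin (n+1)) (a : K.cube (n+1)),
    GlobularCube K (n+1) a → GlobularCube K (n+1) (K.inv n i a)

/-- The globular set of globular cubes of a cubical ω-groupoid. -/
def HGlobSet (K : OmegaGpd) (h : HData K) : GlobularSet where
  cell n := {a : K.cube n // GlobularCube K n a}
  src n a := ⟨K.face n 0 false a.1, h.face_glob n false a.1 a.2⟩
  tgt n a := ⟨K.face n 0 true a.1, h.face_glob n true a.1 a.2⟩
  id n a := ⟨K.degen n 0 a.1, h.degen_glob n a.1 a.2⟩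

def HStr (K : OmegaGpd) (h : HData K) : InfGpdStr (HGlobSet K h) where
  comp n i hi a b := match n, i, hi, a, b with
    | 0, i, hi, _, _ => absurd hi (Nat.not_lt_zero i)
    | m+1, i, hi, a, b =>
      ⟨K.comp m ⟨i, hi⟩ a.1 b.1, h.comp_glob m ⟨i, hi⟩ a.1 b.1 a.2 b.2⟩
  inv n i hi a := match n, i, hi, a with
    | 0, i, hi, _ => absurd hi (Nat.not_lt_zero i)
    | m+1, i, hi, a => ⟨K.inv m ⟨i, hi⟩ a.1, h.inv_glob m ⟨i, hi⟩ a.1 a.2⟩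

/-- The ∞-groupoid `HK` of globular cubes of a cubical ω-groupoid `K`. -/
def HInf (K : OmegaGpd) (h : HData K) : InfGpd := ⟨HGlobSet K h, HStr K h⟩

/-- Closure of globularity under the internal group operations. -/
structure GroupHData (K : OmegaGpd) (g : InternalGroup K) : Prop where
  mul_glob : ∀ n (a b : K.cube n),
    GlobularCube K n a → GlobularCube K n b → GlobularCube K n (g.mul n a b)
  inv_glob : ∀ n (a : K.cube n), GlobularCube K n a → GlobularCube K n (g.inv n a)
  one_glob : ∀ n, GlobularCube K n (g.one n)

/-- The internal group `HK` on globular cubes induced by an internal group on `K`. -/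
def HGroup (K : OmegaGpd) (h : HData K) (g : InternalGroup K) (hg : GroupHData K g) :
    InfInternalGroup (HInf K h) where
  mul n a b := ⟨g.mul n a.1 b.1, hg.mul_glob n a.1 b.1 a.2 b.2⟩
  inv n a := ⟨g.inv n a.1, hg.inv_glob n a.1 a.2⟩
  one n := ⟨g.one n, hg.one_glob n⟩

/-! ## 1-dimensional simplicial sets (graphs) and free groupoids -/

/-- A 1-dimensional simplicial set, i.e. a graph. -/
structure Graph1 : Type 1 where
  V : Type
  E : Type
  s : E → V
  t : E → V

instance Graph1.instQuiver (X : Graph1) : Quiver X.V :=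
  ⟨fun a b => {e : X.E // X.s e = a ∧ X.t e = b}⟩

/-- `ρ(|X|)` is the free ω-groupoid on the 1-dimensional simplicial set `X`. -/
structure FreeOnGraph (X : Graph1) (K : OmegaGpd) where
  v : X.V → K.cube 0
  e : X.E → K.cube 1
  e_src : ∀ x, K.face 0 0 false (e x) = v (X.s x)
  e_tgt : ∀ x, K.face 0 0 true (e x) = v (X.t x)
  free : ∀ (L : OmegaGpd) (fv : X.V → L.cube 0) (fe : X.E → L.cube 1),
    (∀ x, L.face 0 0 false (fe x) = fv (X.s x)) →
    (∀ x, L.face 0 0 true (fe x) = fv (X.t x)) →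
    ∃! F : OmegaGpdHom K L, (∀ a, F.map 0 (v a) = fv a) ∧ (∀ x, F.map 1 (e x) = fe x)

/-! ## Strict 2-groupoids -/

structure Strict2Gpd : Type 1 where
  obj : Type
  hom : obj → obj → Type
  cell : ∀ {a b : obj}, hom a b → hom a b → Type
  idHom : ∀ a, hom a a
  compHom : ∀ {a b c : obj}, hom a b → hom b c → hom a c
  invHom : ∀ {a b : obj}, hom a b → hom b a
  idCell : ∀ {a b : obj} (f : hom a b), cell f f
  vcomp : ∀ {a b : obj} {f g h : hom a b}, cell f g → cell g h → cell f h
  vinv : ∀ {a b : obj} {f g : hom a b}, cell f g → cell g f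
  hcomp : ∀ {a b c : obj} {f g : hom a b} {f' g' : hom b c},
    cell f g → cell f' g' → cell (compHom f f') (compHom g g')

structure TwoFunctor (A B : Strict2Gpd) where
  onObj : A.obj → B.obj
  onHom : ∀ {a b : A.obj}, A.hom a b → B.hom (onObj a) (onObj b)
  onCell : ∀ {a b : A.obj} {f g : A.hom a b}, A.cell f g → B.cell (onHom f) (onHom g)
  map_idHom : ∀ a, onHom (A.idHom a) = B.idHom (onObj a)
  map_compHom : ∀ {a b c : A.obj} (f : A.hom a b) (g : A.hom b c),
    onHom (A.compHom f g) = B.compHom (onHom f) (onHom g)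
  map_invHom : ∀ {a b : A.obj} (f : A.hom a b), onHom (A.invHom f) = B.invHom (onHom f)
  map_idCell : ∀ {a b : A.obj} (f : A.hom a b), onCell (A.idCell f) = B.idCell (onHom f)
  map_vcomp : ∀ {a b : A.obj} {f g h : A.hom a b} (x : A.cell f g) (y : A.cell g h),
    onCell (A.vcomp x y) = B.vcomp (onCell x) (onCell y)
  map_vinv : ∀ {a b : A.obj} {f g : A.hom a b} (x : A.cell f g),
    onCell (A.vinv x) = B.vinv (onCell x)

def TwoFunctor.comp {A B C : Strict2Gpd} (F : TwoFunctor A B) (G : TwoFunctor B C) :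
    TwoFunctor A C where
  onObj a := G.onObj (F.onObj a)
  onHom f := G.onHom (F.onHom f)
  onCell x := G.onCell (F.onCell x)
  map_idHom a := by
    show G.onHom (F.onHom (A.idHom a)) = C.idHom (G.onObj (F.onObj a))
    rw [F.map_idHom, G.map_idHom]
  map_compHom f g := by
    show G.onHom (F.onHom (A.compHom f g)) = C.compHom (G.onHom (F.onHom f)) (G.onHom (F.onHom g))
    rw [F.map_compHom, G.map_compHom]
  map_invHom f := by
    show G.onHom (F.onHom (A.invHom f)) = C.invHom (G.onHom (F.onHom f))
    rw [F.map_invHom, G.map_invHom]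
  map_idCell f := by
    show G.onCell (F.onCell (A.idCell f)) = C.idCell (G.onHom (F.onHom f))
    rw [F.map_idCell, G.map_idCell]
  map_vcomp x y := by
    show G.onCell (F.onCell (A.vcomp x y)) = C.vcomp (G.onCell (F.onCell x)) (G.onCell (F.onCell y))
    rw [F.map_vcomp, G.map_vcomp]
  map_vinv x := by
    show G.onCell (F.onCell (A.vinv x)) = C.vinv (G.onCell (F.onCell x))
    rw [F.map_vinv, G.map_vinv]

/-! ## 2-dimensional simplicial and cubical sets -/

/-- A 2-dimensional simplicial set: vertices, edges and triangles. -/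
structure SimpData2 : Type 1 where
  V : Type
  E : V → V → Type
  T : ∀ (a b c : V), E a b → E b c → E a c → Type

/-- A 2-dimensional cubical set: vertices, edges and squares
(`Sq f g h k` has top `f`, bottom `g`, left `h`, right `k`). -/
structure CubSet2 : Type 1 where
  V : Type
  E : V → V → Type
  Sq : ∀ {a b c d : V}, E a b → E c d → E a c → E b d → Type

/-- The standard cubulation `Σ*X` of a 2-dimensional simplicial set:
each triangle becomes a square with one degenerate edge. -/
def sigmaStar (X : SimpData2) : CubSet2 where
  V := X.V
  E a b := X.E a b ⊕ PLift (a = b)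
  Sq {p q r s} f g h k :=
    Σ' (hr : r = p) (e01 : X.E p q) (e12 : X.E q s) (e02 : X.E p s)
       (_ : X.T p q s e01 e12 e02),
      PLift (f = Sum.inl e01 ∧ k = Sum.inl e12 ∧ hr ▸ g = Sum.inl e02 ∧ h = Sum.inr ⟨hr.symm⟩)

/-- `F` is the free strict 2-groupoid `F₂(X)` on a 2-dimensional simplicial set `X`. -/
structure FreeOnSimp2 (X : SimpData2) (F : Strict2Gpd) where
  vF : X.V → F.obj
  eF : ∀ {a b : X.V}, X.E a b → F.hom (vF a) (vF b)
  tF : ∀ {a b c : X.V} {e01 : X.E a b} {e12 : X.E b c} {e02 : X.E a c},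
    X.T a b c e01 e12 e02 → F.cell (F.compHom (eF e01) (eF e12)) (eF e02)
  free : ∀ (L : Strict2Gpd) (vL : X.V → L.obj)
    (eL : ∀ {a b : X.V}, X.E a b → L.hom (vL a) (vL b))
    (tL : ∀ {a b c : X.V} {e01 : X.E a b} {e12 : X.E b c} {e02 : X.E a c},
      X.T a b c e01 e12 e02 → L.cell (L.compHom (eL e01) (eL e12)) (eL e02)),
    ∃! Φ : TwoFunctor F L,
      (∀ a, Φ.onObj (vF a) = vL a) ∧
      (∀ (a b : X.V) (x : X.E a b), HEq (Φ.onHom (eF x)) (eL x)) ∧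
      (∀ (a b c : X.V) (e01 : X.E a b) (e12 : X.E b c) (e02 : X.E a c)
        (t : X.T a b c e01 e12 e02), HEq (Φ.onCell (tF t)) (tL t))

/-- `R` is the homotopy 2-groupoid `ρ∘(|Σ*X|)`, characterized by freeness on the
cubical set `Σ*X`. -/
structure FreeOnCub2 (Cb : CubSet2) (F : Strict2Gpd) where
  vF : Cb.V → F.obj
  eF : ∀ {a b : Cb.V}, Cb.E a b → F.hom (vF a) (vF b)
  sF : ∀ {a b c d : Cb.V} {f : Cb.E a b} {g : Cb.E c d} {h : Cb.E a c} {k : Cb.E b d},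
    Cb.Sq f g h k → F.cell (F.compHom (eF f) (eF k)) (F.compHom (eF h) (eF g))
  free : ∀ (L : Strict2Gpd) (vL : Cb.V → L.obj)
    (eL : ∀ {a b : Cb.V}, Cb.E a b → L.hom (vL a) (vL b))
    (sL : ∀ {a b c d : Cb.V} {f : Cb.E a b} {g : Cb.E c d} {h : Cb.E a c} {k : Cb.E b d},
      Cb.Sq f g h k → L.cell (L.compHom (eL f) (eL k)) (L.compHom (eL h) (eL g))),
    ∃! Φ : TwoFunctor F L,
      (∀ a, Φ.onObj (vF a) = vL a) ∧
      (∀ (a b : Cb.V) (x : Cb.E a b), HEq (Φ.onHom (eF x)) (eL x)) ∧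
      (∀ (a b c d : Cb.V) (f : Cb.E a b) (g : Cb.E c d) (h : Cb.E a c) (k : Cb.E b d)
        (s : Cb.Sq f g h k), HEq (Φ.onCell (sF s)) (sL s))

/-- `K` is the free cubical ω-groupoid `ρ(|Σ*X|)` on a 2-dimensional cubical set. -/
structure FreeOnCub2Omega (Cb : CubSet2) (K : OmegaGpd) where
  v : Cb.V → K.cube 0
  e : ∀ {a b : Cb.V}, Cb.E a b → K.cube 1
  e_src : ∀ (a b : Cb.V) (x : Cb.E a b), K.face 0 0 false (e x) = v a
  e_tgt : ∀ (a b : Cb.V) (x : Cb.E a b), K.face 0 0 true (e x) = v b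
  sq : ∀ {a b c d : Cb.V} {f : Cb.E a b} {g : Cb.E c d} {h : Cb.E a c} {k : Cb.E b d},
    Cb.Sq f g h k → K.cube 2
  sq_faces : ∀ (a b c d : Cb.V) (f : Cb.E a b) (g : Cb.E c d) (h : Cb.E a c) (k : Cb.E b d)
    (s : Cb.Sq f g h k),
    K.face 1 0 false (sq s) = e f ∧ K.face 1 0 true (sq s) = e g ∧
    K.face 1 1 false (sq s) = e h ∧ K.face 1 1 true (sq s) = e k
  free : ∀ (L : OmegaGpd) (vL : Cb.V → L.cube 0)
    (eL : ∀ {a b : Cb.V}, Cb.E a b → L.cube 1)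
    (sqL : ∀ {a b c d : Cb.V} {f : Cb.E a b} {g : Cb.E c d} {h : Cb.E a c} {k : Cb.E b d},
      Cb.Sq f g h k → L.cube 2),
    (∀ (a b : Cb.V) (x : Cb.E a b),
      L.face 0 0 false (eL x) = vL a ∧ L.face 0 0 true (eL x) = vL b) →
    (∀ (a b c d : Cb.V) (f : Cb.E a b) (g : Cb.E c d) (h : Cb.E a c) (k : Cb.E b d)
      (s : Cb.Sq f g h k),
      L.face 1 0 false (sqL s) = eL f ∧ L.face 1 0 true (sqL s) = eL g ∧
      L.face 1 1 false (sqL s) = eL h ∧ L.face 1 1 true (sqL s) = eL k) →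
    ∃! Φ : OmegaGpdHom K L,
      (∀ a, Φ.map 0 (v a) = vL a) ∧
      (∀ (a b : Cb.V) (x : Cb.E a b), Φ.map 1 (e x) = eL x) ∧
      (∀ (a b c d : Cb.V) (f : Cb.E a b) (g : Cb.E c d) (h : Cb.E a c) (k : Cb.E b d)
        (s : Cb.Sq f g h k), Φ.map 2 (sq s) = sqL s)

/-! ## The 2-group `H T₂K [-1]` as a one-object strict 2-groupoid -/

/-- The boundary compatibilities used to form `H T₂K[-1]`. -/
structure Trunc2Data (K : OmegaGpd) (g : InternalGroup K) : Prop where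
  face_degen : ∀ (α : Bool) (f : K.cube 0), K.face 0 0 α (K.degen 0 0 f) = f
  comp_face : ∀ a b : K.cube 1,
    K.face 0 0 false (K.comp 0 0 a b) = K.face 0 0 false a ∧
    K.face 0 0 true (K.comp 0 0 a b) = K.face 0 0 true b
  inv_face : ∀ a : K.cube 1,
    K.face 0 0 false (K.inv 0 0 a) = K.face 0 0 true a ∧
    K.face 0 0 true (K.inv 0 0 a) = K.face 0 0 false a
  mul_face : ∀ (α : Bool) (a b : K.cube 1),
    K.face 0 0 α (g.mul 1 a b) = g.mul 0 (K.face 0 0 α a) (K.face 0 0 α b)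

/-- The one-object strict 2-groupoid `H T₂K[-1]`: 1-cells are the 0-cubes of `K`
composed by the internal multiplication, 2-cells are 1-cubes with prescribed faces. -/
def deloopTrunc2 (K : OmegaGpd) (g : InternalGroup K) (hD : Trunc2Data K g) : Strict2Gpd where
  obj := PUnit
  hom _ _ := K.cube 0
  cell f f' := {a : K.cube 1 // K.face 0 0 false a = f ∧ K.face 0 0 true a = f'}
  idHom _ := g.one 0
  compHom f f' := g.mul 0 f f'
  invHom f := g.inv 0 f
  idCell f := ⟨K.degen 0 0 f, hD.face_degen false f, hD.face_degen true f⟩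
  vcomp := fun {a b f g' h} x y => ⟨K.comp 0 0 x.1 y.1, by
    refine ⟨?_, ?_⟩
    · rw [(hD.comp_face x.1 y.1).1, x.2.1]
    · rw [(hD.comp_face x.1 y.1).2, y.2.2]⟩
  vinv := fun {a b f g'} x => ⟨K.inv 0 0 x.1, by
    refine ⟨?_, ?_⟩
    · rw [(hD.inv_face x.1).1, x.2.2]
    · rw [(hD.inv_face x.1).2, x.2.1]⟩
  hcomp := fun {a b c f g' f' g''} x y => ⟨g.mul 1 x.1 y.1, by
    refine ⟨?_, ?_⟩
    · rw [hD.mul_face false x.1 y.1, x.2.1, y.2.1]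
    · rw [hD.mul_face true x.1 y.1, x.2.2, y.2.2]⟩

/-! ## Path simplices -/

/-- Abstract data of the simplices of a simplicial set together with their
path simplices `Γ_{τν}` (homotopy globes of paths) in `ρ∘(|X|)`. -/
structure SimplexData (RX : InfGpd) : Type 1 where
  S : Type
  dim : S → ℕ
  nested : S → S → Prop
  nested_trans : ∀ {σ ν τ : S}, nested σ ν → nested ν τ → nested σ τ
  dim_lt : ∀ {σ τ : S}, nested σ τ → dim σ < dim τ
  Γ : ∀ {σ τ : S}, nested σ τ → RX.glob.cell (dim σ + 1)
  bdry : Bool → S → S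
  dim_bdry : ∀ b σ, dim (bdry b σ) + 1 = dim σ
  bdry_nested : ∀ (b : Bool) {σ τ : S}, nested σ τ → nested (bdry b σ) τ

/-! An internal group structure on `L` makes every `L.cube n` an ordinary group, so the
`L`-valued fields on `K` form a group under the pointwise operations. The gauge condition
`B = u(s a) · A · u(t a)⁻¹` is conjugation in these groups, and solving it for `A` gives
`A = u(s a)⁻¹ · B · (u(t a)⁻¹)⁻¹`, i.e. `u⁻¹ : B ⇝ A`. -/

@[ext]
theorem OmegaGpdHom.ext {K L : OmegaGpd} {f g : OmegaGpdHom K L}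
    (h : ∀ n a, f.map n a = g.map n a) : f = g := by
  cases f; cases g
  congr
  funext n a
  exact h n a

namespace IsInternalGroup

variable {L : OmegaGpd} {g : InternalGroup L}

abbrev toGroup (hg : IsInternalGroup L g) (n : ℕ) : Group (L.cube n) where
  mul := g.mul n
  one := g.one n
  inv := g.inv n
  mul_assoc := hg.mul_assoc n
  one_mul := hg.one_mul n
  mul_one := hg.mul_one n
  inv_mul_cancel := hg.inv_mul n

abbrev homGroup (hg : IsInternalGroup L g) (K : OmegaGpd) : Group (OmegaGpdHom K L) where
  mul := mulHom hg
  one := oneHom hg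
  inv := invHomG hg
  mul_assoc u v w := OmegaGpdHom.ext fun n _ => hg.mul_assoc n _ _ _
  one_mul u := OmegaGpdHom.ext fun n _ => hg.one_mul n _
  mul_one u := OmegaGpdHom.ext fun n _ => hg.mul_one n _
  inv_mul_cancel u := OmegaGpdHom.ext fun n _ => hg.inv_mul n _

end IsInternalGroup

section GaugeTransf

variable {KX L : OmegaGpd} {g : InternalGroup L} (hg : IsInternalGroup L g)

theorem isGaugeTransf_oneHom (D : LHGF KX L g) : IsGaugeTransf g D D (oneHom hg) := by
  intro n a
  let _ := hg.toGroup n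
  change 1 * D.mapMor.map n a * 1⁻¹ = D.mapMor.map n a
  group

theorem IsGaugeTransf.invHomG {A B : LHGF KX L g} {u : OmegaGpdHom KX L}
    (hu : IsGaugeTransf g A B u) : IsGaugeTransf g B A (invHomG hg u) := by
  intro n a
  let _ := hg.toGroup n
  rw [← hu n a]
  change (u.map n _)⁻¹ * (u.map n _ * A.mapMor.map n a * (u.map n _)⁻¹) * (u.map n _)⁻¹⁻¹ = _
  group

end GaugeTransf

/-- The pointwise internal inverse of a local gauge transformation
`u : A ⇝ B` is a local gauge transformation `B ⇝ A` with `u ⊙ u⁻¹ = 1 = u⁻¹ ⊙ u`;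
consequently, local LHGFs and local gauge transformations form a groupoid. -/
theorem gauge_transf_inv_and_groupoid (ρ : RhoFunctor) (X : FilteredSpace)
    (G : FilteredTopGroup)
    (hg : IsInternalGroup (ρ.obj G.space) (rhoGroup ρ G))
    (A B : LHGF (ρ.obj X) (ρ.obj G.space) (rhoGroup ρ G))
    (u : OmegaGpdHom (ρ.obj X) (ρ.obj G.space))
    (hu : IsGaugeTransf (rhoGroup ρ G) A B u) :
    IsGaugeTransf (rhoGroup ρ G) B A (invHomG hg u) ∧
    mulHom hg u (invHomG hg u) = oneHom hg ∧
    mulHom hg (invHomG hg u) u = oneHom hg ∧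
    -- the groupoid structure: identities, units, associativity
    (∀ D : LHGF (ρ.obj X) (ρ.obj G.space) (rhoGroup ρ G),
      IsGaugeTransf (rhoGroup ρ G) D D (oneHom hg)) ∧
    (∀ u1 u2 u3 : OmegaGpdHom (ρ.obj X) (ρ.obj G.space),
      mulHom hg (mulHom hg u1 u2) u3 = mulHom hg u1 (mulHom hg u2 u3)) ∧
    (∀ u1 : OmegaGpdHom (ρ.obj X) (ρ.obj G.space),
      mulHom hg (oneHom hg) u1 = u1 ∧ mulHom hg u1 (oneHom hg) = u1) := by
  let _ := hg.homGroup (ρ.obj X)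
  exact ⟨hu.invHomG hg, mul_inv_cancel u, inv_mul_cancel u, isGaugeTransf_oneHom hg,
    mul_assoc, fun u1 => ⟨one_mul u1, mul_one u1⟩⟩
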